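/- arXiv:2411.17823 — 2 statements merged into one kernel-verified Lean document; each statement's English description precedes it below -/
import Mathlib

section
/- For c ≥ 1 and X ≥ 1, the only points (a/c, b/c) in S(X) lying strictly under the hyperbola xy < 1/X (with 0 < a/c, b/c ≤ 1) are the points (1/c, 1/c) for √X < c ≤ X. In particular, the pair (a,b) = (1,1) satisfies ab ≡ 1 mod c for all c. -/
/-- The only points `(a/c, b/c)` of `S(X)` lying strictly under the hyperbola `xy < 1/X`
are the points `(1/c, 1/c)` with `√X < c ≤ X`; in particular `(a,b) = (1,1)` satisfies
`ab ≡ 1 (mod c)` for every `c`. -/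
theorem under_hyperbola (X : ℝ) (hX : 1 ≤ X) (a b c : ℕ)
    (ha : 1 ≤ a) (hac : a ≤ c) (hb : 1 ≤ b) (hbc : b ≤ c) (hcX : (c : ℝ) ≤ X)
    (hcong : a * b ≡ 1 [MOD c])
    (hhyp : (a : ℝ) / c * ((b : ℝ) / c) < 1 / X) :
    (a = 1 ∧ b = 1 ∧ Real.sqrt X < (c : ℝ)) ∧ ∀ d : ℕ, 1 * 1 ≡ 1 [MOD d] := by
  have hc1 : 1 ≤ c := le_trans ha hac
  have hcpos : (0 : ℝ) < c := by exact_mod_cast hc1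
  have hXpos : (0 : ℝ) < X := lt_of_lt_of_le one_pos hX
  -- from hyperbola: a*b*X < c*c
  have hkey : (a : ℝ) * b * X < c * c := by
    have := hhyp
    rw [div_mul_div_comm, div_lt_div_iff₀ (by positivity) hXpos] at this
    linarith
  have hab_lt : a * b < c := by
    have h1 : (a : ℝ) * b * c ≤ (a : ℝ) * b * X := by
      apply mul_le_mul_of_nonneg_left hcX
      positivity
    have h2 : (a : ℝ) * b * c < c * c := lt_of_le_of_lt h1 hkey
    have h3 : (a : ℝ) * b < c := lt_of_mul_lt_mul_right h2 (le_of_lt hcpos)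
    exact_mod_cast h3
  have hab1 : a * b = 1 := by
    have h1c : 1 < c := lt_of_le_of_lt (Nat.one_le_iff_ne_zero.mpr (by positivity)) hab_lt
    have := hcong
    unfold Nat.ModEq at this
    rwa [Nat.mod_eq_of_lt hab_lt, Nat.mod_eq_of_lt h1c] at this
  have haeq : a = 1 := Nat.eq_one_of_mul_eq_one_right hab1
  have hbeq : b = 1 := Nat.eq_one_of_mul_eq_one_left hab1
  subst haeq hbeq
  refine ⟨⟨rfl, rfl, ?_⟩, fun d => Nat.ModEq.refl _⟩
  rw [Real.sqrt_lt' hcpos]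
  simpa [sq] using hkey
end

section
/- Selberg's identity for Kloosterman sums: for positive integers m, n, c, S(m, n; c) = Σ_{d | gcd(m, n, c)} d · S(mn/d², 1; c/d). -/
/-!
Let `e_c` be the standard additive character of `ZMod c`. Since
`t (1 - x y) + m x + n y = y (n - t x) + m x + t`, summing `e_c` of this over `x, y, t ∈ ZMod c` and
using orthogonality first in `t`, then in `y`, gives `S(m, n; c) = Σ_{t x = n} e_c (m x + t)`.
Group the pairs by `d = gcd(t, c)` and write `t = d v` with `v` a unit modulo `c / d`: the equation
`t x = n` forces `d ∣ n` and fixes `x` modulo `c / d` as `v⁻¹ (n / d)`, and summing `e_c (m x)` over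
the `d` lifts of that class gives `d` or `0` according as `d ∣ m` or not. What is left is
`d · Σ_v e_{c/d} (v + (m n / d²) v⁻¹) = d · S(m n / d², 1; c / d)`.
-/

noncomputable section

/-- The Kloosterman sum `S(m, n; c) = Σ_{1≤a,b≤c, ab≡1 mod c} e((ma + nb)/c)`. -/
def kloos (m n : ℤ) (c : ℕ) : ℂ :=
  ∑ a ∈ Finset.Icc 1 c, ∑ b ∈ Finset.Icc 1 c,
    if a * b % c = 1 % c then
      Complex.exp (2 * Real.pi * Complex.I * ((m * a + n * b : ℤ) : ℂ) / (c : ℂ))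
    else 0

open Finset ZMod

section Reindexing

variable {M : Type*} [AddCommMonoid M]

theorem sum_range_natCast_eq_sum_zmod (n : ℕ) [NeZero n] (f : ZMod n → M) :
    ∑ k ∈ range n, f k = ∑ x : ZMod n, f x :=
  sum_nbij' (↑) val (by simp) (by simp [val_lt]) (fun k hk => val_cast_of_lt (mem_range.1 hk))
    (fun x _ => natCast_zmod_val x) (fun _ _ => rfl)

theorem sum_Icc_one_natCast_eq_sum_zmod (n : ℕ) [NeZero n] (f : ZMod n → M) :
    ∑ k ∈ Icc 1 n, f k = ∑ x : ZMod n, f x := by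
  rw [← Ico_add_one_right_eq_Icc, ← zero_add 1, ← sum_Ico_add', ← range_eq_Ico]
  simp only [Nat.cast_add, Nat.cast_one]
  rw [sum_range_natCast_eq_sum_zmod n (fun x => f (x + 1))]
  exact Fintype.sum_equiv (Equiv.addRight 1) _ _ fun _ => rfl

theorem sum_range_eq_sum_divisors_sum_coprime {c : ℕ} (hc : c ≠ 0) (f : ℕ → M) :
    ∑ k ∈ range c, f k =
      ∑ d ∈ c.divisors, ∑ v ∈ range (c / d) with v.Coprime (c / d), f (d * v) := by
  rw [← sum_fiberwise_of_maps_to (g := c.gcd) (t := c.divisors)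
    (fun k _ => Nat.mem_divisors.2 ⟨Nat.gcd_dvd_left c k, hc⟩)]
  refine sum_congr rfl fun d hd => ?_
  obtain ⟨e, rfl⟩ := Nat.dvd_of_mem_divisors hd
  have hd0 : 0 < d := Nat.pos_of_mem_divisors hd
  rw [Nat.mul_div_cancel_left e hd0]
  symm
  refine sum_bij (fun v _ => d * v) ?_ (fun _ _ _ _ h => Nat.eq_of_mul_eq_mul_left hd0 h) ?_
    (fun _ _ => rfl)
  · simp only [mem_filter, mem_range]
    exact fun v ⟨hv, hcop⟩ => ⟨by gcongr, by rw [Nat.gcd_mul_left, hcop.symm, mul_one]⟩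
  · simp only [mem_filter, mem_range]
    rintro k ⟨hk, hgcd⟩
    obtain ⟨v, rfl⟩ : d ∣ k := hgcd ▸ Nat.gcd_dvd_right _ _
    refine ⟨v, ⟨(mul_lt_mul_iff_right₀ hd0).1 hk, ?_⟩, rfl⟩
    rw [Nat.gcd_mul_left, mul_eq_left₀ hd0.ne'] at hgcd
    exact Nat.coprime_comm.1 hgcd

end Reindexing

section Characters

variable {c : ℕ} [NeZero c]

theorem sum_stdAddChar_mul_add (a b : ZMod c) :
    ∑ t : ZMod c, stdAddChar (t * b + a) = if b = 0 then c * stdAddChar a else 0 := by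
  simp_rw [AddChar.map_add_eq_mul, ← sum_mul,
    AddChar.sum_mulShift b (isPrimitive_stdAddChar c), ZMod.card]
  split_ifs <;> simp

theorem stdAddChar_natCast_mul {d e : ℕ} [NeZero e] (h : d * e = c) (y : ZMod c) :
    stdAddChar ((d : ZMod c) * y) = stdAddChar (castHom (Dvd.intro_left d h) (ZMod e) y) := by
  subst h
  obtain ⟨k, rfl⟩ := intCast_surjective y
  have hd : (d : ℂ) ≠ 0 := Nat.cast_ne_zero.2 (left_ne_zero_of_mul (NeZero.ne (d * e)))
  rw [map_intCast, ← Int.cast_natCast, ← Int.cast_mul, stdAddChar_coe, stdAddChar_coe]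
  congr 1
  push_cast
  field_simp

end Characters

section Fibers

variable {d e : ℕ} [NeZero d]

theorem natCast_mul_eq_natCast_iff (n : ℕ) (y : ZMod (d * e)) :
    (d : ZMod (d * e)) * y = n ↔
      d ∣ n ∧ castHom (dvd_mul_left e d) (ZMod e) y = ((n / d : ℕ) : ZMod e) := by
  obtain ⟨k, rfl⟩ := intCast_surjective y
  have hd : (d : ℤ) ≠ 0 := by exact_mod_cast NeZero.ne d
  rw [map_intCast, ← Int.cast_natCast (R := ZMod (d * e)) d, ← Int.cast_mul,
    ← Int.cast_natCast (R := ZMod (d * e)) n, intCast_eq_intCast_iff_dvd_sub,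
    ← Int.cast_natCast (R := ZMod e) (n / d), intCast_eq_intCast_iff_dvd_sub]
  by_cases hdn : d ∣ n
  · obtain ⟨n', rfl⟩ := hdn
    rw [Nat.mul_div_cancel_left n' (Nat.pos_of_ne_zero (NeZero.ne d))]
    push_cast
    rw [← mul_sub, mul_dvd_mul_iff_left hd]
    simp
  · simp only [hdn, false_and, iff_false]
    intro h
    refine hdn (Int.natCast_dvd_natCast.1 ?_)
    have := dvd_add ((Dvd.intro _ (Nat.cast_mul d e).symm).trans h) (dvd_mul_right (d : ℤ) k)
    simpa using this

variable [NeZero e]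

theorem sum_castHom_fiber {M : Type*} [AddCommMonoid M] (w : ZMod e) (f : ZMod (d * e) → M) :
    ∑ x : ZMod (d * e) with castHom (dvd_mul_left e d) (ZMod e) x = w, f x =
      ∑ i ∈ range d, f ((w.val + e * i : ℕ) : ZMod (d * e)) := by
  have he : 0 < e := Nat.pos_of_ne_zero (NeZero.ne e)
  have hlt (i : ℕ) (hi : i < d) : w.val + e * i < d * e := by
    have : e * (i + 1) ≤ e * d := Nat.mul_le_mul_left e hi
    have := w.val_lt
    nlinarith
  symm
  refine sum_nbij' (fun i => ((w.val + e * i : ℕ) : ZMod (d * e))) (fun x => x.val / e)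
    (fun i _ => ?_) (fun x _ => ?_) (fun i hi => ?_) (fun x hx => ?_) (fun _ _ => rfl)
  · rw [mem_filter, map_natCast]
    simp
  · exact mem_range.2 (Nat.div_lt_of_lt_mul (mul_comm d e ▸ x.val_lt))
  · rw [val_cast_of_lt (hlt i (mem_range.1 hi)), Nat.add_mul_div_left _ _ he,
      Nat.div_eq_of_lt w.val_lt, zero_add]
  · have hw : w.val = x.val % e := by
      rw [← (mem_filter.1 hx).2, castHom_apply, cast_eq_val, val_natCast]
    simp only [hw, Nat.mod_add_div, natCast_zmod_val]

theorem sum_stdAddChar_castHom_fiber (m : ℕ) (w : ZMod e) :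
    ∑ x : ZMod (d * e) with castHom (dvd_mul_left e d) (ZMod e) x = w,
        stdAddChar ((m : ZMod (d * e)) * x) =
      if d ∣ m then d * stdAddChar (((m / d : ℕ) : ZMod e) * w) else 0 := by
  have hsplit (i : ℕ) : stdAddChar ((m : ZMod (d * e)) * ((w.val + e * i : ℕ) : ZMod (d * e))) =
      stdAddChar ((m : ZMod (d * e)) * ((w.val : ℕ) : ZMod (d * e))) *
        stdAddChar ((i : ZMod d) * (m : ZMod d)) := by
    rw [show (i : ZMod d) * (m : ZMod d) =
        castHom (Dvd.intro_left e (mul_comm e d)) (ZMod d) ((i * m : ℕ) : ZMod (d * e)) by simp,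
      ← stdAddChar_natCast_mul (mul_comm e d), ← AddChar.map_add_eq_mul]
    congr 1
    push_cast
    ring
  rw [sum_castHom_fiber, sum_congr rfl fun i _ => hsplit i, ← mul_sum,
    sum_range_natCast_eq_sum_zmod d (fun s => stdAddChar (s * (m : ZMod d))),
    AddChar.sum_mulShift _ (isPrimitive_stdAddChar d)]
  simp only [ZMod.card, natCast_eq_zero_iff]
  split_ifs with hdm
  · obtain ⟨m', rfl⟩ := hdm
    rw [Nat.mul_div_cancel_left m' (Nat.pos_of_ne_zero (NeZero.ne d)), Nat.cast_mul, mul_assoc,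
      stdAddChar_natCast_mul rfl, map_mul, map_natCast, map_natCast, natCast_zmod_val, mul_comm]
  · rw [Nat.cast_zero, mul_zero]

theorem sum_stdAddChar_of_mul_eq_natCast (m n : ℕ) {v : ℕ} (hv : v.Coprime e) :
    ∑ x : ZMod (d * e) with ((d * v : ℕ) : ZMod (d * e)) * x = n,
        stdAddChar ((m : ZMod (d * e)) * x + ((d * v : ℕ) : ZMod (d * e))) =
      if d ∣ m ∧ d ∣ n then
        d * stdAddChar ((v : ZMod e) + ((m / d * (n / d) : ℕ) : ZMod e) * (v : ZMod e)⁻¹)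
      else 0 := by
  have hv : IsUnit (v : ZMod e) := (isUnit_iff_coprime v e).2 hv
  have hfiber (x : ZMod (d * e)) : ((d * v : ℕ) : ZMod (d * e)) * x = n ↔
      d ∣ n ∧ castHom (dvd_mul_left e d) (ZMod e) x = (v : ZMod e)⁻¹ * (n / d : ℕ) := by
    rw [Nat.cast_mul, mul_assoc, natCast_mul_eq_natCast_iff, map_mul, map_natCast]
    refine and_congr_right fun _ => ⟨fun h => ?_, fun h => ?_⟩
    · rw [← h, ← mul_assoc, inv_mul_of_unit _ hv, one_mul]
    · rw [h, ← mul_assoc, mul_inv_of_unit _ hv, one_mul]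
  rw [filter_congr fun x _ => hfiber x]
  by_cases hdn : d ∣ n
  · simp only [hdn, true_and, and_true, AddChar.map_add_eq_mul, ← sum_mul,
      sum_stdAddChar_castHom_fiber]
    rw [Nat.cast_mul, stdAddChar_natCast_mul rfl, map_natCast]
    split_ifs
    · simp only [Nat.cast_mul]
      ring_nf
    · rw [zero_mul]
  · simp [hdn]

end Fibers

def kloosterman (c : ℕ) [NeZero c] (m n : ZMod c) : ℂ :=
  ∑ x : ZMod c, ∑ y : ZMod c, if x * y = 1 then stdAddChar (m * x + n * y) else 0

section Kloosterman

variable {c : ℕ} [NeZero c]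

theorem kloos_eq_kloosterman (m n : ℤ) : kloos m n c = kloosterman c m n := by
  rw [kloos, kloosterman, ← sum_Icc_one_natCast_eq_sum_zmod]
  refine sum_congr rfl fun a _ => ?_
  rw [← sum_Icc_one_natCast_eq_sum_zmod]
  refine sum_congr rfl fun b _ => ?_
  have hunit : a * b % c = 1 % c ↔ (a : ZMod c) * b = 1 := by
    rw [← natCast_eq_natCast_iff', Nat.cast_mul, Nat.cast_one]
  simp only [hunit, ← stdAddChar_coe]
  push_cast
  rfl

theorem kloosterman_comm (m n : ZMod c) : kloosterman c m n = kloosterman c n m := by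
  rw [kloosterman, kloosterman, sum_comm]
  refine sum_congr rfl fun y _ => sum_congr rfl fun x _ => ?_
  rw [mul_comm y x, add_comm]

theorem kloosterman_eq_sum_isUnit (m n : ZMod c) :
    kloosterman c m n = ∑ x : ZMod c with IsUnit x, stdAddChar (m * x + n * x⁻¹) := by
  rw [kloosterman, sum_filter]
  refine sum_congr rfl fun x _ => ?_
  by_cases hx : IsUnit x
  · have (y : ZMod c) : x * y = 1 ↔ x⁻¹ = y :=
      ⟨ZMod.inv_eq_of_mul_eq_one c x y, fun h => h ▸ mul_inv_of_unit x hx⟩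
    simp only [this, sum_ite_eq, mem_univ, if_true, hx]
  · have (y : ZMod c) : x * y ≠ 1 := fun h => hx (IsUnit.of_mul_eq_one y h)
    simp [this, hx]

theorem kloosterman_eq_sum_mul_eq (m n : ZMod c) :
    kloosterman c m n = ∑ t : ZMod c, ∑ x : ZMod c with t * x = n, stdAddChar (m * x + t) := by
  have hc : (c : ℂ) ≠ 0 := Nat.cast_ne_zero.2 (NeZero.ne c)
  refine mul_left_cancel₀ hc ?_
  calc (c : ℂ) * kloosterman c m n
      = ∑ x : ZMod c, ∑ y : ZMod c, ∑ t : ZMod c,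
          stdAddChar (t * (1 - x * y) + (m * x + n * y)) := by
        simp only [sum_stdAddChar_mul_add, sub_eq_zero, eq_comm (a := (1 : ZMod c)), kloosterman,
          mul_sum, mul_ite, mul_zero]
    _ = ∑ t : ZMod c, ∑ x : ZMod c, ∑ y : ZMod c,
          stdAddChar (y * (n - t * x) + (m * x + t)) := by
        have hexp (x y t : ZMod c) :
            t * (1 - x * y) + (m * x + n * y) = y * (n - t * x) + (m * x + t) := by ring
        simp only [hexp]
        exact (sum_congr rfl fun x _ => sum_comm).trans sum_comm
    _ = c * ∑ t : ZMod c, ∑ x : ZMod c with t * x = n, stdAddChar (m * x + t) := by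
        simp only [sum_stdAddChar_mul_add, sub_eq_zero, eq_comm (a := n), sum_filter, mul_sum,
          mul_ite, mul_zero]

end Kloosterman

theorem Nat.divisors_filter_dvd_and_dvd {c : ℕ} (hc : c ≠ 0) (m n : ℕ) :
    {d ∈ c.divisors | d ∣ m ∧ d ∣ n} = ((m.gcd n).gcd c).divisors := by
  ext d
  simp only [mem_filter, Nat.mem_divisors, Nat.dvd_gcd_iff, ne_eq, Nat.gcd_eq_zero_iff, hc,
    and_false, not_false_eq_true, and_true]
  tauto

theorem sum_coprime_sum_stdAddChar_eq_kloos {c d : ℕ} [NeZero c] (hd : d ∈ c.divisors) (m n : ℕ) :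
    ∑ v ∈ range (c / d) with v.Coprime (c / d), ∑ x : ZMod c with ((d * v : ℕ) : ZMod c) * x = n,
        stdAddChar ((m : ZMod c) * x + ((d * v : ℕ) : ZMod c)) =
      if d ∣ m ∧ d ∣ n then d * kloos ((m * n / d ^ 2 : ℕ) : ℤ) 1 (c / d) else 0 := by
  obtain ⟨e, rfl⟩ := Nat.dvd_of_mem_divisors hd
  have hd0 : 0 < d := Nat.pos_of_mem_divisors hd
  have : NeZero d := ⟨hd0.ne'⟩
  have : NeZero e := ⟨right_ne_zero_of_mul (NeZero.ne (d * e))⟩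
  rw [Nat.mul_div_cancel_left e hd0, sum_congr rfl fun v hv => sum_stdAddChar_of_mul_eq_natCast m n
    (mem_filter.1 hv).2]
  split_ifs with hdmn
  · rw [← mul_sum, kloos_eq_kloosterman, kloosterman_comm, kloosterman_eq_sum_isUnit, sum_filter,
      sum_filter, ← sum_range_natCast_eq_sum_zmod, Int.cast_one, Int.cast_natCast, sq,
      ← Nat.div_mul_div_comm hdmn.1 hdmn.2]
    simp only [isUnit_iff_coprime, one_mul]
  · simp

theorem selberg_identity_general (m n c : ℕ) (hc : 0 < c) :
    kloos (m : ℤ) (n : ℤ) c =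
      ∑ d ∈ ((m.gcd n).gcd c).divisors,
        (d : ℂ) * kloos ((m * n / d ^ 2 : ℕ) : ℤ) 1 (c / d) := by
  have : NeZero c := ⟨hc.ne'⟩
  rw [kloos_eq_kloosterman, kloosterman_eq_sum_mul_eq, ← sum_range_natCast_eq_sum_zmod,
    sum_range_eq_sum_divisors_sum_coprime hc.ne', ← Nat.divisors_filter_dvd_and_dvd hc.ne',
    sum_filter]
  simp only [Int.cast_natCast]
  exact sum_congr rfl fun d hd => sum_coprime_sum_stdAddChar_eq_kloos hd m n

/-- Selberg's identity: `S(m, n; c) = Σ_{d | gcd(m,n,c)} d · S(mn/d², 1; c/d)`. -/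
theorem selberg_identity (m n c : ℕ) (hm : 0 < m) (hn : 0 < n) (hc : 0 < c) :
    kloos (m : ℤ) (n : ℤ) c =
      ∑ d ∈ ((m.gcd n).gcd c).divisors,
        (d : ℂ) * kloos ((m * n / d ^ 2 : ℕ) : ℤ) 1 (c / d) :=
  selberg_identity_general m n c hc

end
end
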